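/- Let λ be unimodular with λ² ≠ -1 and set c = Im(λ)/Re(λ) ∈ ℝ. Then λ² = (1+ic)/(1-ic), and the symmetric matrix F_n := P_n(I_n + iJ_n(c)) satisfies: F_n⁻*F_n = λ²(I_n + a₁J_n(0) + a₂J_n(0)² + ···) with a₁ = 2i/(1+c²) ≠ 0, hence F_n⁻*F_n is similar to J_n(λ²). -/

import Mathlib

open Matrix Complex

def JBlock (n : ℕ) (μ : ℂ) : Matrix (Fin n) (Fin n) ℂ :=
  Matrix.of fun i j => if i = j then μ else if (i : ℕ) + 1 = (j : ℕ) then 1 else 0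

/-- The n×n reversal matrix (1's on the antidiagonal). -/
def Pmat (n : ℕ) : Matrix (Fin n) (Fin n) ℂ :=
  Matrix.of fun i j => if (i : ℕ) + (j : ℕ) = n - 1 then 1 else 0

def MatSimilar {m : Type*} [Fintype m] [DecidableEq m] (A B : Matrix m m ℂ) : Prop :=
  ∃ S : Matrix m m ℂ, IsUnit S ∧ A = S⁻¹ * B * S

/-!
Write `N = J_n(0)`, `α = 1 - ic` and `β = 1 + ic`. Since `λ = Re λ · (1 + ic)` and `λ λ̄ = 1`,
`λ² = λ / λ̄ = β / α`. Every polynomial in `N` is an upper triangular Toeplitz matrix, so `P_n`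
times it is a real Hankel matrix; hence `F_n = P_n (β + iN)` is symmetric and `F_n* = P_n (α - iN)`.
As `α + β = 2`, `F_n⁻* F_n = (α - iN)⁻¹ (2 - (α - iN)) = 2 (α - iN)⁻¹ - 1`, and the finite Neumann
series `(α - iN)⁻¹ = α⁻¹ ∑ (iN/α)^j` gives the expansion. Finally `K = F_n⁻* F_n - λ²` is strictly
upper triangular with constant superdiagonal `λ² a₁ ≠ 0`, so the vectors `K^(n-1-j) e_n` form an
upper triangular basis in which `K` acts as `N`.
-/

open ComplexConjugate

lemma JBlock_eq_smul_one_add (n : ℕ) (μ : ℂ) : JBlock n μ = μ • 1 + JBlock n 0 := by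
  ext i j
  by_cases h : i = j <;> simp [JBlock, one_apply, h]

lemma JBlock_zero_apply (n : ℕ) (i j : Fin n) :
    JBlock n 0 i j = if (i : ℕ) + 1 = j then 1 else 0 := by
  by_cases h : i = j <;> simp [JBlock, h]

lemma JBlock_zero_pow_apply (n m : ℕ) (i k : Fin n) :
    (JBlock n 0 ^ m) i k = if (i : ℕ) + m = k then 1 else 0 := by
  induction m generalizing k with
  | zero => simp [one_apply, Fin.ext_iff]
  | succ m ih =>
    simp only [pow_succ, mul_apply, ih, JBlock_zero_apply, mul_ite, mul_one, mul_zero]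
    by_cases h : (i : ℕ) + m < n
    · rw [Finset.sum_eq_single ⟨i + m, h⟩
        (fun l _ hl => by simp only [ne_eq, Fin.ext_iff] at hl; simp [Ne.symm hl]) (by simp)]
      simp [add_assoc]
    · rw [if_neg (by omega)]
      exact Finset.sum_eq_zero fun l _ => by split_ifs <;> first | rfl | omega

lemma JBlock_zero_pow_self (n : ℕ) : JBlock n 0 ^ n = 0 := by
  ext i k
  rw [JBlock_zero_pow_apply, if_neg (by omega)]
  rfl

lemma sum_smul_JBlock_zero_pow_apply (n : ℕ) (a : ℕ → ℂ) (i k : Fin n) :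
    (∑ j ∈ Finset.range n, a j • JBlock n 0 ^ j) i k = if (i : ℕ) ≤ k then a (k - i) else 0 := by
  simp only [Matrix.sum_apply, Matrix.smul_apply, JBlock_zero_pow_apply, smul_eq_mul, mul_ite,
    mul_one, mul_zero]
  split_ifs with h
  · rw [Finset.sum_eq_single (k - i : ℕ) (fun j _ hj => if_neg (by omega)) (by simp; omega),
      if_pos (by omega)]
  · exact Finset.sum_eq_zero fun j _ => if_neg (by omega)

lemma mul_JBlock_zero_apply_zero {n : ℕ} (X : Matrix (Fin (n + 1)) (Fin (n + 1)) ℂ)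
    (i : Fin (n + 1)) : (X * JBlock (n + 1) 0) i 0 = 0 := by
  simp [mul_apply, JBlock_zero_apply]

lemma mul_JBlock_zero_apply_succ {n : ℕ} (X : Matrix (Fin (n + 1)) (Fin (n + 1)) ℂ)
    (i : Fin (n + 1)) (l : Fin n) : (X * JBlock (n + 1) 0) i l.succ = X i l.castSucc := by
  rw [mul_apply, Finset.sum_eq_single l.castSucc (fun k _ hk => ?_) (by simp)]
  · simp [JBlock_zero_apply]
  · rw [JBlock_zero_apply, if_neg (fun h => hk (Fin.ext (by simp at h ⊢; omega))), mul_zero]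

lemma Pmat_apply_eq_ite_rev (n : ℕ) (i j : Fin n) : Pmat n i j = if j = i.rev then 1 else 0 := by
  simp only [Pmat, of_apply, Fin.ext_iff, Fin.val_rev]
  exact if_congr (by omega) rfl rfl

lemma Pmat_mul_apply (n : ℕ) (X : Matrix (Fin n) (Fin n) ℂ) (i j : Fin n) :
    (Pmat n * X) i j = X i.rev j := by
  simp [mul_apply, Pmat_apply_eq_ite_rev]

lemma Pmat_mul_Pmat (n : ℕ) : Pmat n * Pmat n = 1 := by
  ext i j
  rw [Pmat_mul_apply, Pmat_apply_eq_ite_rev, Fin.rev_rev, one_apply]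
  exact if_congr eq_comm rfl rfl

lemma Pmat_mul_JBlock_zero_pow_apply (n m : ℕ) (i j : Fin n) :
    (Pmat n * JBlock n 0 ^ m) i j = if n - 1 + m = i + j then 1 else 0 := by
  rw [Pmat_mul_apply, JBlock_zero_pow_apply, Fin.val_rev]
  exact if_congr (by omega) rfl rfl

lemma transpose_Pmat_mul_JBlock_zero_pow (n m : ℕ) :
    (Pmat n * JBlock n 0 ^ m)ᵀ = Pmat n * JBlock n 0 ^ m := by
  ext i j
  simp only [transpose_apply, Pmat_mul_JBlock_zero_pow_apply, add_comm (j : ℕ)]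

lemma conjTranspose_Pmat_mul_JBlock_zero_pow (n m : ℕ) :
    (Pmat n * JBlock n 0 ^ m)ᴴ = Pmat n * JBlock n 0 ^ m := by
  ext i j
  simp only [conjTranspose_apply, Pmat_mul_JBlock_zero_pow_apply, add_comm (j : ℕ)]
  split_ifs <;> simp

lemma transpose_Pmat_mul_smul_one_add_smul (n : ℕ) (a b : ℂ) :
    (Pmat n * (a • 1 + b • JBlock n 0))ᵀ = Pmat n * (a • 1 + b • JBlock n 0) := by
  have h0 := transpose_Pmat_mul_JBlock_zero_pow n 0
  have h1 := transpose_Pmat_mul_JBlock_zero_pow n 1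
  rw [pow_zero, mul_one] at h0
  rw [pow_one] at h1
  rw [mul_add, Matrix.mul_smul, Matrix.mul_smul, mul_one, transpose_add, transpose_smul,
    transpose_smul, h0, h1]

lemma conjTranspose_Pmat_mul_smul_one_add_smul (n : ℕ) (a b : ℂ) :
    (Pmat n * (a • 1 + b • JBlock n 0))ᴴ = Pmat n * (star a • 1 + star b • JBlock n 0) := by
  have h0 := conjTranspose_Pmat_mul_JBlock_zero_pow n 0
  have h1 := conjTranspose_Pmat_mul_JBlock_zero_pow n 1
  rw [pow_zero, mul_one] at h0
  rw [pow_one] at h1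
  rw [mul_add, Matrix.mul_smul, Matrix.mul_smul, mul_one, conjTranspose_add, conjTranspose_smul,
    conjTranspose_smul, h0, h1, mul_add, Matrix.mul_smul, Matrix.mul_smul, mul_one]

lemma normSq_eq_one_of_norm_eq_one {z : ℂ} (hz : ‖z‖ = 1) : normSq z = 1 := by
  rw [normSq_eq_norm_sq, hz, one_pow]

lemma re_ne_zero_of_norm_eq_one {z : ℂ} (hz : ‖z‖ = 1) (h2 : z ^ 2 ≠ -1) : z.re ≠ 0 := by
  intro hre
  have him : z.im * z.im = 1 := by
    simpa [normSq_apply, hre] using normSq_eq_one_of_norm_eq_one hz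
  exact h2 (Complex.ext (by simp [sq, hre, him]) (by simp [sq, hre]))

lemma one_add_I_mul_div_re (z : ℂ) (hre : z.re ≠ 0) :
    1 + I * ((z.im / z.re : ℝ) : ℂ) = z / z.re := by
  apply Complex.ext <;> simp [div_ofReal_re, div_ofReal_im, hre]

lemma one_sub_I_mul_div_re (z : ℂ) (hre : z.re ≠ 0) :
    1 - I * ((z.im / z.re : ℝ) : ℂ) = conj z / z.re := by
  apply Complex.ext <;> simp [div_ofReal_re, div_ofReal_im, hre, neg_div]

lemma sq_eq_div_of_norm_eq_one {z : ℂ} (hz : ‖z‖ = 1) (hre : z.re ≠ 0) :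
    z ^ 2 = (1 + I * ((z.im / z.re : ℝ) : ℂ)) / (1 - I * ((z.im / z.re : ℝ) : ℂ)) := by
  have hconj : z * conj z = 1 := by rw [mul_conj, normSq_eq_one_of_norm_eq_one hz, ofReal_one]
  have hz0 : conj z ≠ 0 := right_ne_zero_of_mul_eq_one hconj
  rw [one_add_I_mul_div_re z hre, one_sub_I_mul_div_re z hre,
    div_div_div_cancel_right₀ (ofReal_ne_zero.mpr hre), eq_div_iff hz0, sq, mul_assoc, hconj,
    mul_one]

lemma one_add_I_mul_ofReal_ne_zero (c : ℝ) : 1 + I * c ≠ 0 := by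
  simp [Complex.ext_iff]

lemma one_sub_I_mul_ofReal_ne_zero (c : ℝ) : 1 - I * c ≠ 0 := by
  simp [Complex.ext_iff]

lemma star_one_add_I_mul_ofReal (c : ℝ) : star (1 + I * (c : ℂ)) = 1 - I * c := by
  simp [sub_eq_add_neg]

lemma smul_one_sub_smul_mul_geom_sum {m K : Type*} [Fintype m] [DecidableEq m] [Field K]
    {N : Matrix m m K} {n : ℕ} (hN : N ^ n = 0) {α : K} (hα : α ≠ 0) (b : K) :
    (α • 1 - b • N) * (α⁻¹ • ∑ j ∈ Finset.range n, ((b / α) • N) ^ j) = 1 := by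
  have hfactor : α • 1 - b • N = α • (1 - (b / α) • N) := by
    rw [smul_sub, smul_smul, mul_div_cancel₀ _ hα]
  rw [hfactor, smul_mul_smul_comm, mul_inv_cancel₀ hα, one_smul, mul_neg_geom_sum, smul_pow, hN,
    smul_zero, sub_zero]

noncomputable def Fcoeff (c : ℝ) (j : ℕ) : ℂ :=
  if j = 0 then 1 else 2 / (1 + I * c) * (I / (1 - I * c)) ^ j

lemma Fcoeff_zero (c : ℝ) : Fcoeff c 0 = 1 := if_pos rfl

lemma Fcoeff_one (c : ℝ) : Fcoeff c 1 = 2 * I / (1 + (c : ℂ) ^ 2) := by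
  have hα := one_sub_I_mul_ofReal_ne_zero c
  have hβ := one_add_I_mul_ofReal_ne_zero c
  have h : (1 + I * c) * (1 - I * c) = 1 + (c : ℂ) ^ 2 := by
    linear_combination (-(c : ℂ) ^ 2) * I_sq
  rw [Fcoeff, if_neg one_ne_zero, pow_one, ← h]
  field_simp

lemma Fcoeff_one_ne_zero (c : ℝ) : Fcoeff c 1 ≠ 0 := by
  have h : (1 + (c : ℂ) ^ 2) ≠ 0 := by exact_mod_cast (by positivity : (0 : ℝ) < 1 + c ^ 2).ne'
  rw [Fcoeff_one]
  exact div_ne_zero (mul_ne_zero two_ne_zero I_ne_zero) h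

lemma div_mul_Fcoeff (c : ℝ) (j : ℕ) :
    (1 + I * c) / (1 - I * c) * Fcoeff c j =
      2 / (1 - I * c) * (I / (1 - I * c)) ^ j - if j = 0 then 1 else 0 := by
  have hα := one_sub_I_mul_ofReal_ne_zero c
  have hβ := one_add_I_mul_ofReal_ne_zero c
  unfold Fcoeff
  split_ifs with hj
  · subst hj
    field_simp
    ring
  · rw [sub_zero]
    field_simp

lemma inv_mul_eq_smul_sum_Fcoeff (n : ℕ) (c : ℝ) :
    ((1 - I * c) • 1 - I • JBlock (n + 1) 0)⁻¹ * ((1 + I * c) • 1 + I • JBlock (n + 1) 0) =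
      ((1 + I * c) / (1 - I * c)) •
        ∑ j ∈ Finset.range (n + 1), Fcoeff c j • JBlock (n + 1) 0 ^ j := by
  set N := JBlock (n + 1) 0
  set Y := (1 - I * c) • (1 : Matrix (Fin (n + 1)) (Fin (n + 1)) ℂ) - I • N
  set G := ∑ j ∈ Finset.range (n + 1), ((I / (1 - I * c)) • N) ^ j
  have hYG : Y * ((1 - I * c)⁻¹ • G) = 1 :=
    smul_one_sub_smul_mul_geom_sum (JBlock_zero_pow_self (n + 1)) (one_sub_I_mul_ofReal_ne_zero c) I
  have hYinv : Y⁻¹ = (1 - I * c)⁻¹ • G := inv_eq_right_inv hYG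
  have hYY : Y⁻¹ * Y = 1 := nonsing_inv_mul Y (isUnit_det_of_right_inverse hYG)
  have hX : (1 + I * c) • 1 + I • N = (2 : ℂ) • 1 - Y := by
    simp only [Y]
    module
  calc Y⁻¹ * ((1 + I * c) • 1 + I • N) = (2 / (1 - I * c)) • G - 1 := by
        rw [hX, mul_sub, hYY, Matrix.mul_smul, mul_one, hYinv, smul_smul, div_eq_mul_inv]
    _ = _ := by
        simp only [Finset.smul_sum, smul_smul, div_mul_Fcoeff, sub_smul, Finset.sum_sub_distrib,
          ite_smul, zero_smul, Finset.sum_ite_eq', Finset.mem_range, Nat.zero_lt_succ, if_true,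
          pow_zero, G, smul_pow, one_smul]

lemma MatSimilar.of_mul_eq_mul {m : Type*} [Fintype m] [DecidableEq m] {A B R : Matrix m m ℂ}
    (hR : IsUnit R.det) (h : A * R = R * B) : MatSimilar A B := by
  refine ⟨R⁻¹, (isUnit_nonsing_inv_iff).mpr ((isUnit_iff_isUnit_det R).mpr hR), ?_⟩
  rw [nonsing_inv_nonsing_inv R hR, ← h, mul_nonsing_inv_cancel_right _ _ hR]

section StrictlyUpperTriangular

variable {R : Type*} [Semiring R] {n : ℕ} {K : Matrix (Fin n) (Fin n) R} {c : R}

lemma pow_apply_eq_zero_of_lt (hlow : ∀ i k : Fin n, (k : ℕ) ≤ i → K i k = 0) {m : ℕ}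
    {i k : Fin n} (hk : (k : ℕ) < i + m) : (K ^ m) i k = 0 := by
  induction m generalizing k with
  | zero => rw [pow_zero, one_apply_ne (by rintro rfl; omega)]
  | succ m ih =>
    rw [pow_succ, mul_apply]
    refine Finset.sum_eq_zero fun l _ => ?_
    by_cases hl : (l : ℕ) < i + m
    · rw [ih hl, zero_mul]
    · rw [hlow l k (by omega), mul_zero]

lemma pow_apply_eq_pow_of_eq (hlow : ∀ i k : Fin n, (k : ℕ) ≤ i → K i k = 0)
    (hsup : ∀ i k : Fin n, (k : ℕ) = i + 1 → K i k = c) {m : ℕ} {i k : Fin n}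
    (hk : (k : ℕ) = i + m) : (K ^ m) i k = c ^ m := by
  induction m generalizing k with
  | zero => rw [pow_zero, pow_zero, Fin.ext hk.symm, one_apply_eq]
  | succ m ih =>
    rw [pow_succ, mul_apply, Finset.sum_eq_single ⟨i + m, by omega⟩, ih rfl, hsup _ k hk, pow_succ]
    · intro l _ hl
      by_cases hlt : (l : ℕ) < i + m
      · rw [pow_apply_eq_zero_of_lt hlow hlt, zero_mul]
      · rw [hlow l k (by have := Fin.val_ne_of_ne hl; simp only at this; omega), mul_zero]
    · simp

end StrictlyUpperTriangular

def krylovMatrix {n : ℕ} (K : Matrix (Fin (n + 1)) (Fin (n + 1)) ℂ) :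
    Matrix (Fin (n + 1)) (Fin (n + 1)) ℂ :=
  of fun i j => (K ^ (n - j)) i (Fin.last n)

lemma mul_krylovMatrix_apply {n : ℕ} (K : Matrix (Fin (n + 1)) (Fin (n + 1)) ℂ)
    (i j : Fin (n + 1)) : (K * krylovMatrix K) i j = (K ^ (n - j + 1)) i (Fin.last n) := by
  rw [pow_succ', mul_apply, mul_apply]
  rfl

lemma mul_krylovMatrix {n : ℕ} {K : Matrix (Fin (n + 1)) (Fin (n + 1)) ℂ}
    (hK : K ^ (n + 1) = 0) : K * krylovMatrix K = krylovMatrix K * JBlock (n + 1) 0 := by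
  ext i j
  rw [mul_krylovMatrix_apply]
  cases j using Fin.cases with
  | zero => rw [mul_JBlock_zero_apply_zero, Fin.val_zero, Nat.sub_zero, hK, Matrix.zero_apply]
  | succ l =>
    rw [mul_JBlock_zero_apply_succ, krylovMatrix, of_apply, Fin.val_succ, Fin.val_castSucc,
      show n - (l + 1) + 1 = n - l by omega]

lemma isUnit_det_krylovMatrix {n : ℕ} {K : Matrix (Fin (n + 1)) (Fin (n + 1)) ℂ} {c : ℂ}
    (hlow : ∀ i k : Fin (n + 1), (k : ℕ) ≤ i → K i k = 0)
    (hsup : ∀ i k : Fin (n + 1), (k : ℕ) = i + 1 → K i k = c) (hc : c ≠ 0) :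
    IsUnit (krylovMatrix K).det := by
  have htri : (krylovMatrix K).IsUpperTriangular := fun i j (hji : j < i) =>
    pow_apply_eq_zero_of_lt hlow (by simp only [Fin.val_last]; omega)
  rw [det_of_isUpperTriangular htri]
  refine isUnit_iff_ne_zero.mpr (Finset.prod_ne_zero_iff.mpr fun j _ => ?_)
  rw [krylovMatrix, of_apply, pow_apply_eq_pow_of_eq hlow hsup (by simp only [Fin.val_last]; omega)]
  exact pow_ne_zero _ hc

lemma matSimilar_smul_one_add_JBlock {n : ℕ} {K : Matrix (Fin (n + 1)) (Fin (n + 1)) ℂ} {c : ℂ}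
    (hlow : ∀ i k : Fin (n + 1), (k : ℕ) ≤ i → K i k = 0)
    (hsup : ∀ i k : Fin (n + 1), (k : ℕ) = i + 1 → K i k = c) (hc : c ≠ 0) (μ : ℂ) :
    MatSimilar (μ • 1 + K) (JBlock (n + 1) μ) := by
  have hK : K ^ (n + 1) = 0 := by
    ext i k
    exact pow_apply_eq_zero_of_lt hlow (by omega)
  refine MatSimilar.of_mul_eq_mul (isUnit_det_krylovMatrix hlow hsup hc) ?_
  rw [JBlock_eq_smul_one_add, add_mul, mul_add, smul_mul, one_mul, Matrix.mul_smul, mul_one,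
    mul_krylovMatrix hK]

lemma matSimilar_smul_sum_JBlock_zero_pow {n : ℕ} {μ : ℂ} (hμ : μ ≠ 0) {a : ℕ → ℂ}
    (ha0 : a 0 = 1) (ha1 : a 1 ≠ 0) :
    MatSimilar (μ • ∑ j ∈ Finset.range (n + 1), a j • JBlock (n + 1) 0 ^ j)
      (JBlock (n + 1) μ) := by
  set S := ∑ j ∈ Finset.range (n + 1), a j • JBlock (n + 1) 0 ^ j with hS
  have hK : ∀ i k, (μ • (S - 1)) i k =
      μ * ((if (i : ℕ) ≤ k then a (k - i) else 0) - if i = k then 1 else 0) := fun i k => by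
    rw [Matrix.smul_apply, Matrix.sub_apply, one_apply, hS, sum_smul_JBlock_zero_pow_apply,
      smul_eq_mul]
  rw [show μ • S = μ • 1 + μ • (S - 1) by module]
  refine matSimilar_smul_one_add_JBlock (c := μ * a 1) (fun i k hki => ?_) (fun i k hki => ?_)
    (mul_ne_zero hμ ha1) μ
  · rw [hK]
    rcases eq_or_ne i k with rfl | hik
    · simp [ha0]
    · rw [if_neg (fun h => hik (Fin.ext (by omega))), if_neg hik, sub_zero, mul_zero]
  · rw [hK, if_pos (by omega), if_neg (by rintro rfl; omega), sub_zero,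
      show (k : ℕ) - i = 1 by omega]

/-- For unimodular `λ` with `λ² ≠ -1` and `c = Im λ / Re λ ∈ ℝ`, one has
`λ² = (1+ic)/(1-ic)`, and the symmetric matrix `F_n = P_n(I + iJ_n(c))` satisfies
`F_n⁻*F_n = λ²(I + a₁J_n(0) + a₂J_n(0)² + ⋯)` with `a₁ = 2i/(1+c²) ≠ 0`, hence
`F_n⁻*F_n` is similar to `J_n(λ²)`. -/
theorem typeI_block_Fn (n : ℕ) (hn : 1 ≤ n) (lam : ℂ) (hlam : ‖lam‖ = 1)
    (h2 : lam ^ 2 ≠ -1) :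
    lam ^ 2 = (1 + I * ((lam.im / lam.re : ℝ) : ℂ)) / (1 - I * ((lam.im / lam.re : ℝ) : ℂ)) ∧
    (Pmat n * (1 + I • JBlock n ((lam.im / lam.re : ℝ) : ℂ)))ᵀ =
      Pmat n * (1 + I • JBlock n ((lam.im / lam.re : ℝ) : ℂ)) ∧
    (∃ a : ℕ → ℂ, a 0 = 1 ∧ a 1 = 2 * I / (1 + ((lam.im / lam.re : ℝ) : ℂ) ^ 2) ∧ a 1 ≠ 0 ∧
      ((Pmat n * (1 + I • JBlock n ((lam.im / lam.re : ℝ) : ℂ)))ᴴ)⁻¹ *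
          (Pmat n * (1 + I • JBlock n ((lam.im / lam.re : ℝ) : ℂ))) =
        lam ^ 2 • ∑ j ∈ Finset.range n, a j • JBlock n 0 ^ j) ∧
    MatSimilar (((Pmat n * (1 + I • JBlock n ((lam.im / lam.re : ℝ) : ℂ)))ᴴ)⁻¹ *
        (Pmat n * (1 + I • JBlock n ((lam.im / lam.re : ℝ) : ℂ))))
      (JBlock n (lam ^ 2)) := by
  obtain ⟨n, rfl⟩ : ∃ m, n = m + 1 := ⟨n - 1, by omega⟩
  set c : ℝ := lam.im / lam.re
  have hlam2 : lam ^ 2 = (1 + I * c) / (1 - I * c) :=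
    sq_eq_div_of_norm_eq_one hlam (re_ne_zero_of_norm_eq_one hlam h2)
  have hX : 1 + I • JBlock (n + 1) c = (1 + I * c) • 1 + I • JBlock (n + 1) 0 := by
    rw [JBlock_eq_smul_one_add, smul_add, smul_smul, add_smul, one_smul, add_assoc]
  have hY : star (1 + I * c) • 1 + star I • JBlock (n + 1) 0 =
      (1 - I * c) • 1 - I • JBlock (n + 1) 0 := by
    rw [star_one_add_I_mul_ofReal, star_def, conj_I, neg_smul, ← sub_eq_add_neg]
  have hF : ((Pmat (n + 1) * (1 + I • JBlock (n + 1) c))ᴴ)⁻¹ *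
      (Pmat (n + 1) * (1 + I • JBlock (n + 1) c)) =
        lam ^ 2 • ∑ j ∈ Finset.range (n + 1), Fcoeff c j • JBlock (n + 1) 0 ^ j := by
    rw [hX, conjTranspose_Pmat_mul_smul_one_add_smul, hY, Matrix.mul_inv_rev, mul_assoc,
      ← mul_assoc (Pmat _)⁻¹, inv_eq_left_inv (Pmat_mul_Pmat _), Pmat_mul_Pmat, one_mul, hlam2,
      inv_mul_eq_smul_sum_Fcoeff]
  refine ⟨hlam2, hX ▸ transpose_Pmat_mul_smul_one_add_smul _ _ _,
    ⟨Fcoeff c, Fcoeff_zero c, Fcoeff_one c, Fcoeff_one_ne_zero c, hF⟩, hF ▸ ?_⟩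
  have hlam0 : lam ≠ 0 := norm_ne_zero_iff.mp (hlam ▸ one_ne_zero)
  exact matSimilar_smul_sum_JBlock_zero_pow (pow_ne_zero 2 hlam0) (Fcoeff_zero c)
    (Fcoeff_one_ne_zero c)
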